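/- arXiv:math/0410523 — 2 statements merged into one kernel-verified Lean document; each statement's English description precedes it below -/
import Mathlib

section
/- Any first-order theory T in a recursive language with an infinite model has a recursively saturated elementary extension of the same cardinality: every model M has an elementary extension N that is recursively saturated with |N| = |M|. -/
open FirstOrder

namespace Paper

universe u v w



/-- A Gödel numbering of bounded formulas of a recursive (encodable) language. -/
noncomputable instance boundedFormulaEncodable (L : FirstOrder.Language.{u, v})
    [∀ n, Encodable (L.Functions n)] [∀ n, Encodable (L.Relations n)]
    (α : Type) [Encodable α] (n : ℕ) : Encodable (L.BoundedFormula α n) :=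
  haveI : Countable (Σ k, L.BoundedFormula α k) :=
    Function.Injective.countable
      (f := fun φ : Σ k, L.BoundedFormula α k => φ.2.listEncode)
      Language.BoundedFormula.listEncode_sigma_injective
  haveI : Countable (L.BoundedFormula α n) :=
    Function.Injective.countable
      (f := fun φ : L.BoundedFormula α n => (⟨n, φ⟩ : Σ k, L.BoundedFormula α k))
      sigma_mk_injective
  Encodable.ofCountable _

variable (L : FirstOrder.Language.{u, v})

section Saturation

variable [∀ n, Encodable (L.Functions n)] [∀ n, Encodable (L.Relations n)]

/-- The set of Gödel numbers of a set of formulas. -/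
noncomputable def godelSet {α : Type} [Encodable α] (p : Set (L.Formula α)) : Set ℕ :=
  Encodable.encode '' p

/-- A set of formulas (in a recursive language) is recursive if its set of Gödel
numbers is a computable predicate. -/
def RecSet {α : Type} [Encodable α] (p : Set (L.Formula α)) : Prop :=
  ComputablePred (· ∈ godelSet L p)

end Saturation

variable (M : Type w) [L.Structure M]

/-- `p(x̄, ā)` is a type over `M` with parameters `ā`: it is finitely satisfiable in `M`
(equivalently, consistent with `Th(M, ā)`). -/
def IsTypeOver {m k : ℕ} (a : Fin k → M) (p : Set (L.Formula (Fin m ⊕ Fin k))) : Prop :=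
  ∀ S : Finset (L.Formula (Fin m ⊕ Fin k)), ↑S ⊆ p →
    ∃ x : Fin m → M, ∀ φ ∈ S, φ.Realize (Sum.elim x a)

/-- The type `p(x̄, ā)` is realized in `M`. -/
def RealizesType {m k : ℕ} (a : Fin k → M) (p : Set (L.Formula (Fin m ⊕ Fin k))) : Prop :=
  ∃ x : Fin m → M, ∀ φ ∈ p, φ.Realize (Sum.elim x a)

/-- `M` is recursively saturated: every recursive type over `M` with finitely many
parameters is realized in `M`. -/
def RecursivelySaturated [∀ n, Encodable (L.Functions n)] [∀ n, Encodable (L.Relations n)] :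
    Prop :=
  ∀ (m k : ℕ) (a : Fin k → M) (p : Set (L.Formula (Fin m ⊕ Fin k))),
    RecSet L p → IsTypeOver L M a p → RealizesType L M a p

/-- The tuples `ā` and `b̄` have the same complete type in `M`. -/
def SameType {k : ℕ} (a b : Fin k → M) : Prop :=
  ∀ φ : L.Formula (Fin k), φ.Realize a ↔ φ.Realize b

/-- `M` is `ω`-homogeneous. -/
def OmegaHomogeneous : Prop :=
  ∀ (k : ℕ) (a b : Fin k → M), SameType L M a b →
    ∀ c : M, ∃ d : M, SameType L M (Fin.snoc a c) (Fin.snoc b d)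

/-- `M` is strongly homogeneous: every type-preserving finite tuple correspondence
extends to an automorphism. -/
def StronglyHomogeneous : Prop :=
  ∀ (k : ℕ) (a b : Fin k → M), SameType L M a b →
    ∃ g : M ≃[L] M, ∀ i, g (a i) = b i

/-- `p(x̄, ā)` is a complete type over `M`. -/
def CompleteTypeOver {m k : ℕ} (a : Fin k → M) (p : Set (L.Formula (Fin m ⊕ Fin k))) : Prop :=
  IsTypeOver L M a p ∧
    ∀ φ : L.Formula (Fin m ⊕ Fin k), φ ∈ p ∨ Language.Formula.not φ ∈ p

/-- `M` is `X`-saturated for a collection `X` of subsets of `ω`: a complete type over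
`M` is realized in `M` exactly when the set of Gödel numbers of its parameter-free
version belongs to `X`. -/
def XSaturated [∀ n, Encodable (L.Functions n)] [∀ n, Encodable (L.Relations n)]
    (X : Set (Set ℕ)) : Prop :=
  ∀ (m k : ℕ) (a : Fin k → M) (p : Set (L.Formula (Fin m ⊕ Fin k))),
    CompleteTypeOver L M a p → (RealizesType L M a p ↔ godelSet L p ∈ X)


/-! The ultrapower `M^ℕ/𝒰` of `M` along a nonprincipal ultrafilter realizes every finitely
satisfiable type with finitely many parameters in a countable language (it is `ω`-saturated),
in particular every recursive one. There are only countably many recursive types, so adding,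
for each of them, function symbols naming the coordinates of a realization gives a countable
expansion; the Skolem hull of `M` in that expansion is an elementary substructure of the
ultrapower of cardinality `#M`, and it is recursively saturated because it is closed under
the witnessing functions. -/

open Filter Cardinal FirstOrder.Language

variable {L M}

theorem exists_forall_eventually_of_forall_finset {ι X : Type*} [Countable ι] [Nonempty X]
    {l : Filter ℕ} (hl : l ≤ atTop) (R : ι → ℕ → X → Prop)
    (h : ∀ s : Finset ι, ∀ᶠ i in l, ∃ x, ∀ j ∈ s, R j i x) :
    ∃ f : ℕ → X, ∀ j, ∀ᶠ i in l, R j i (f i) := by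
  classical
  obtain ⟨e, he⟩ := exists_injective_nat ι
  let F : ℕ → Finset ι := fun n => (Finset.range n).preimage e he.injOn
  -- At coordinate `i`, realize the longest initial segment `F n`, `n ≤ i`, realizable at `i`;
  -- as `l ≤ atTop`, each `j` eventually lies in that segment.
  have hD : ∀ i, ∃ x, ∀ j ∈ F (Nat.findGreatest (fun n => ∃ x, ∀ j ∈ F n, R j i x) i),
      R j i x := fun i =>
    Nat.findGreatest_spec (P := fun n => ∃ x, ∀ j ∈ F n, R j i x) (Nat.zero_le i)
      ⟨Classical.arbitrary X, by simp [F]⟩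
  choose f hf using hD
  refine ⟨f, fun j => ?_⟩
  filter_upwards [h (F (e j + 1)), hl (eventually_ge_atTop (e j + 1))] with i hi hle
  have hjD := Nat.le_findGreatest (P := fun n => ∃ x, ∀ j ∈ F n, R j i x) hle hi
  exact hf i j (by simpa [F] using hjD)

theorem _root_.FirstOrder.Language.Substructure.card_closure_le_of_countable
    {L : FirstOrder.Language.{u, v}} {M : Type w} [L.Structure M]
    [Countable (Σ i, L.Functions i)] (s : Set M) :
    #(Substructure.closure L s) ≤ max ℵ₀ #s := by
  rw [← Cardinal.lift_le.{u}]
  refine Substructure.lift_card_closure_le.trans ?_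
  have hL : lift.{w} #(Σ i, L.Functions i) ≤ ℵ₀ := lift_le_aleph0.2 mk_le_aleph0
  rw [lift_max, lift_aleph0]
  refine max_le (le_max_left _ _) ((add_le_max _ _).trans ?_)
  exact max_le (max_le (le_max_right _ _) (hL.trans (le_max_left _ _))) (le_max_left _ _)

def _root_.FirstOrder.Language.ElementaryEmbedding.codRestrict {L : FirstOrder.Language.{u, v}}
    {M N : Type*} [L.Structure M] [L.Structure N] (f : M ↪ₑ[L] N)
    (S : L.ElementarySubstructure N) (h : Set.range f ⊆ S) : M ↪ₑ[L] S where
  toFun x := ⟨f x, h ⟨x, rfl⟩⟩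
  map_formula' _ φ x := (S.subtype.map_formula φ _).symm.trans (f.map_formula φ x)

section Ultrapower

variable (M) in
abbrev NatUltrapower : Type w :=
  ((hyperfilter ℕ : Ultrafilter ℕ) : Filter ℕ).Product fun _ : ℕ => M

variable [Nonempty M]

noncomputable def ultrapowerDiagonal {α : Type*} (u : Ultrafilter α) :
    M ↪ₑ[L] (u : Filter α).Product fun _ : α => M where
  toFun x := ((fun _ => x : α → M) : (u : Filter α).Product fun _ : α => M)
  map_formula' _ φ x := by
    refine (Ultraproduct.realize_formula_cast φ (fun b _ => x b)).trans ?_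
    simp

theorem NatUltrapower.realize_sumElim {α β : Type*} (φ : L.Formula (α ⊕ β))
    (x : α → ℕ → M) (y : β → ℕ → M) :
    φ.Realize (Sum.elim (fun a => (x a : NatUltrapower M)) fun b => (y b : NatUltrapower M)) ↔
      ∀ᶠ i in hyperfilter ℕ, φ.Realize (Sum.elim (x · i) (y · i)) := by
  have hcast : Sum.elim (fun a => (x a : NatUltrapower M)) (fun b => (y b : NatUltrapower M)) =
      fun c => ((Sum.elim x y c : ℕ → M) : NatUltrapower M) := by
    funext c; cases c <;> rfl
  have hcoord (i : ℕ) : Sum.elim (x · i) (y · i) = fun c => Sum.elim x y c i := by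
    funext c; cases c <;> rfl
  simp only [hcast, hcoord]
  exact Ultraproduct.realize_formula_cast φ (Sum.elim x y)

theorem NatUltrapower.realizesType_of_countable {m k : ℕ} {a : Fin k → NatUltrapower M}
    {p : Set (L.Formula (Fin m ⊕ Fin k))} (hpc : p.Countable)
    (hp : IsTypeOver L (NatUltrapower M) a p) : RealizesType L (NatUltrapower M) a p := by
  have := hpc.to_subtype
  choose g hg using fun v => Quotient.exists_rep (a v)
  obtain rfl : a = fun v => (g v : NatUltrapower M) := funext fun v => (hg v).symm
  obtain ⟨f, hf⟩ := exists_forall_eventually_of_forall_finset Nat.hyperfilter_le_atTop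
    (fun (φ : p) i (y : Fin m → M) => φ.1.Realize (Sum.elim y (g · i))) fun s => by
      obtain ⟨x, hx⟩ := hp (s.map (Function.Embedding.subtype _)) (by simp)
      choose y hy using fun v => Quotient.exists_rep (x v)
      obtain rfl : x = fun v => (y v : NatUltrapower M) := funext fun v => (hy v).symm
      have hs := (eventually_all_finset s).2 fun φ hφ =>
        (realize_sumElim φ.1 y g).1 (hx φ.1 (Finset.mem_map_of_mem _ hφ))
      filter_upwards [hs] with i hi
      exact ⟨(y · i), hi⟩
  exact ⟨fun v => ((f · v) : NatUltrapower M),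
    fun φ hφ => (realize_sumElim φ _ g).2 (hf ⟨φ, hφ⟩)⟩

theorem NatUltrapower.recursivelySaturated [∀ n, Encodable (L.Functions n)]
    [∀ n, Encodable (L.Relations n)] : RecursivelySaturated L (NatUltrapower M) :=
  fun _ _ _ p _ => realizesType_of_countable p.to_countable

end Ultrapower

theorem countable_setOf_computablePred : {s : Set ℕ | ComputablePred (· ∈ s)}.Countable := by
  refine (Set.countable_range fun f : {f : ℕ → ℕ // Computable f} => {n | f.1 n = 1}).mono ?_
  intro s hs
  obtain ⟨f, hf, hs⟩ := ComputablePred.computable_iff.1 hs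
  refine ⟨⟨fun n => Encodable.encode (f n), Computable.encode.comp hf⟩, ?_⟩
  ext n
  have := congrFun hs n
  cases h : f n <;> simp_all

theorem IsTypeOver.map {N : Type*} [L.Structure N] (f : M ↪ₑ[L] N) {m k : ℕ} {a : Fin k → M}
    {p : Set (L.Formula (Fin m ⊕ Fin k))} (hp : IsTypeOver L M a p) :
    IsTypeOver L N (f ∘ a) p := fun S hS => by
  obtain ⟨x, hx⟩ := hp S hS
  exact ⟨f ∘ x, fun φ hφ => by rw [← Sum.comp_elim, f.map_formula]; exact hx φ hφ⟩

section Hull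

variable [∀ n, Encodable (L.Functions n)] [∀ n, Encodable (L.Relations n)]

instance countable_recSet {α : Type} [Encodable α] :
    Countable {p : Set (L.Formula α) // RecSet L p} :=
  have := countable_setOf_computablePred.to_subtype
  Function.Injective.countable
    (f := fun p => (⟨godelSet L p.1, p.2⟩ : {s : Set ℕ | ComputablePred (· ∈ s)}))
    fun _ _ h =>
      Subtype.ext (Set.image_injective.2 Encodable.encode_injective (congrArg Subtype.val h))

-- The `k`-ary symbol `⟨m, p, j⟩` names the `j`-th coordinate of a realization of `p(x̄, ā)`.
variable (L) in
def recTypeWitnesses : FirstOrder.Language.{max u v, 0} :=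
  ⟨fun k => Σ m, {p : Set (L.Formula (Fin m ⊕ Fin k)) // RecSet L p} × Fin m,
    fun _ => Empty⟩

instance countable_recTypeWitnesses_functions (k : ℕ) :
    Countable ((recTypeWitnesses L).Functions k) :=
  inferInstanceAs (Countable (Σ m, {p : Set (L.Formula (Fin m ⊕ Fin k)) // RecSet L p} × Fin m))

variable [Nonempty M]

noncomputable instance : (recTypeWitnesses L).Structure M where
  funMap := fun ⟨_, p, j⟩ a =>
    Classical.epsilon (fun x => ∀ φ ∈ p.1, φ.Realize (Sum.elim x a)) j
  RelMap := fun r => Empty.elim r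

variable (L) in
noncomputable def recSatHull (s : Set M) : L.ElementarySubstructure M :=
  Substructure.elementarySkolem₁Reduct
    (LHom.sumInl.substructureReduct
      (Substructure.closure ((L.sum L.skolem₁).sum (recTypeWitnesses L)) s))

theorem subset_recSatHull (s : Set M) : s ⊆ recSatHull L s :=
  Substructure.subset_closure

theorem card_recSatHull_le (s : Set M) : #(recSatHull L s) ≤ max ℵ₀ #s := by
  have (k : ℕ) : Countable (L.skolem₁.Functions k) :=
    inferInstanceAs (Countable (L.BoundedFormula Empty (k + 1)))
  have (k : ℕ) : Countable (((L.sum L.skolem₁).sum (recTypeWitnesses L)).Functions k) :=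
    inferInstanceAs (Countable ((_ ⊕ _) ⊕ _))
  exact Substructure.card_closure_le_of_countable s

theorem exists_realization_mem_recSatHull {s : Set M} {m k : ℕ} {a : Fin k → M}
    (ha : ∀ i, a i ∈ recSatHull L s) {p : Set (L.Formula (Fin m ⊕ Fin k))} (hrec : RecSet L p)
    (hp : RealizesType L M a p) :
    ∃ x : Fin m → M, (∀ j, x j ∈ recSatHull L s) ∧
      ∀ φ ∈ p, φ.Realize (Sum.elim x a) :=
  ⟨fun j => Structure.funMap (L := recTypeWitnesses L) ⟨m, ⟨p, hrec⟩, j⟩ a,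
    fun j => (Substructure.closure ((L.sum L.skolem₁).sum (recTypeWitnesses L)) s).fun_mem
      (Sum.inr ⟨m, ⟨p, hrec⟩, j⟩) a ha,
    Classical.epsilon_spec hp⟩

theorem recursivelySaturated_recSatHull (hM : RecursivelySaturated L M) (s : Set M) :
    RecursivelySaturated L (recSatHull L s) := by
  intro m k a p hrec hp
  obtain ⟨x, hxS, hx⟩ := exists_realization_mem_recSatHull (fun i => (a i).2) hrec
    (hM m k _ p hrec (hp.map (recSatHull L s).subtype))
  refine ⟨fun j => ⟨x j, hxS j⟩, fun φ hφ => ?_⟩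
  rw [← (recSatHull L s).subtype.map_formula, Sum.comp_elim]
  exact hx φ hφ

end Hull

/-- Every infinite model (of any theory in a recursive language)
has a recursively saturated elementary extension of the same cardinality. -/
theorem exists_recursivelySaturated_elementaryExtension
    (L : FirstOrder.Language.{u, v}) [iF : ∀ n, Encodable (L.Functions n)]
    [iR : ∀ n, Encodable (L.Relations n)] (M : Type w) [iM : L.Structure M]
    [Infinite M] :
    ∃ (N : Type w) (iN : L.Structure N),
      Nonempty (@FirstOrder.Language.ElementaryEmbedding L M N iM iN) ∧
      @RecursivelySaturated L N iN iF iR ∧ Cardinal.mk N = Cardinal.mk M := by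
  let ι : M ↪ₑ[L] NatUltrapower M := ultrapowerDiagonal (hyperfilter ℕ)
  let N := recSatHull L (Set.range ι)
  let e : M ↪ₑ[L] N := ι.codRestrict N (subset_recSatHull _)
  refine ⟨N, inferInstance, ⟨e⟩, recursivelySaturated_recSatHull
    NatUltrapower.recursivelySaturated _, le_antisymm ?_ (mk_le_of_injective e.injective)⟩
  calc #N ≤ max ℵ₀ #(Set.range ι) := card_recSatHull_le _
    _ ≤ max ℵ₀ #M := max_le_max le_rfl mk_range_le
    _ = #M := max_eq_right (aleph0_le_mk M)

end Paper
end

section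
/- Any two countable X-saturated models of the same complete theory are isomorphic, where X is a fixed Scott set. -/
open FirstOrder

namespace Paper

universe u v w



variable (L : FirstOrder.Language.{u, v})

variable (M : Type w) [L.Structure M]

/-- Oracle-relative partial recursive functions: `RecursiveIn O f` means that the
partial function `f` is computable relative to the oracle (characteristic function of) `O`. -/
inductive RecursiveIn (O : Set ℕ) : (ℕ →. ℕ) → Prop
  | zero : RecursiveIn O (pure 0)
  | succ : RecursiveIn O ↑Nat.succ
  | left : RecursiveIn O fun n => (Nat.unpair n).1
  | right : RecursiveIn O fun n => (Nat.unpair n).2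
  | oracle : RecursiveIn O fun n => Part.some (O.indicator 1 n)
  | pair {f g} : RecursiveIn O f → RecursiveIn O g →
      RecursiveIn O fun n => Nat.pair <$> f n <*> g n
  | comp {f g} : RecursiveIn O f → RecursiveIn O g →
      RecursiveIn O fun n => g n >>= f
  | prec {f g} : RecursiveIn O f → RecursiveIn O g →
      RecursiveIn O
        (Nat.unpaired fun a n =>
          n.rec (f a) fun y IH => do
            let i ← IH
            g (Nat.pair a (Nat.pair y i)))
  | rfind {f} : RecursiveIn O f →
      RecursiveIn O fun a => Nat.rfind fun n => (fun m => m = 0) <$> f (Nat.pair a n)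

/-- `B` is Turing reducible to `A`: the characteristic function of `B` is
computable with oracle `A`. -/
def TuringReducible (B A : Set ℕ) : Prop :=
  RecursiveIn A fun n => Part.some (B.indicator 1 n)

/-- The set of finite binary strings coded (via `Encodable.encode`) in a set of naturals. -/
def treeStrings (T : Set ℕ) : Set (List Bool) :=
  {s | Encodable.encode s ∈ T}

/-- `T ⊆ ℕ` codes an infinite binary tree: the coded strings are closed under
taking prefixes and there are infinitely many of them. -/
def IsInfiniteBinaryTree (T : Set ℕ) : Prop :=
  (∀ s ∈ treeStrings T, ∀ t : List Bool, t <+: s → t ∈ treeStrings T) ∧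
    (treeStrings T).Infinite

/-- `f : ℕ → Bool` is an infinite path through the binary tree coded by `T`. -/
def IsPathThrough (f : ℕ → Bool) (T : Set ℕ) : Prop :=
  ∀ k : ℕ, ((List.range k).map f) ∈ treeStrings T

/-- A Scott set: a nonempty boolean algebra of subsets of `ω` closed under relative
recursion (Turing reducibility), in which every coded infinite binary tree has an
infinite path (whose corresponding subset of `ω` is in the family). -/
structure IsScottSet (X : Set (Set ℕ)) : Prop where
  nonempty : X.Nonempty
  union_mem : ∀ A ∈ X, ∀ B ∈ X, A ∪ B ∈ X
  compl_mem : ∀ A ∈ X, Aᶜ ∈ X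
  turing_mem : ∀ A ∈ X, ∀ B : Set ℕ, TuringReducible B A → B ∈ X
  tree_path : ∀ T ∈ X, IsInfiniteBinaryTree T →
    ∃ f : ℕ → Bool, IsPathThrough f T ∧ {n | f n = true} ∈ X

/-! If `ā ∈ M` and `b̄ ∈ N` satisfy the same formulas and `c ∈ M`, the complete
type of `c` over `ā` is realized in `M`, so its Gödel set lies in `X`. It is also a type over `b̄`
in `N`, as each finite part of it is witnessed by an existential formula true of `ā`, hence of
`b̄`; so `N` realizes it by some `d`. Hence every finite elementary relation between `M` and `N`
extends to cover any given point, and the empty relation is elementary because `M ≡ N`. A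
sequence of such extensions along enumerations of `M` and `N` is the graph of an isomorphism. -/

open Language

section BackAndForth

variable {M} {N : Type*} [L.Structure N]

def HaveSameType {α : Type*} (a : α → M) (b : α → N) : Prop :=
  ∀ φ : L.Formula α, φ.Realize a ↔ φ.Realize b

def IsElementaryRel (R : Set (M × N)) : Prop :=
  ∀ ⦃k : ℕ⦄ (p : Fin k → M × N), (∀ i, p i ∈ R) → HaveSameType L (Prod.fst ∘ p) (Prod.snd ∘ p)

def IsElementaryExtensionPair (M N : Type*) [L.Structure M] [L.Structure N] : Prop :=
  ∀ (k : ℕ) (a : Fin k → M) (b : Fin k → N), HaveSameType L a b →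
    ∀ c : M, ∃ d : N, HaveSameType L (Fin.snoc a c) (Fin.snoc b d)

variable {L}

theorem HaveSameType.comp {α β : Type*} {a : α → M} {b : α → N} (h : HaveSameType L a b)
    (σ : β → α) : HaveSameType L (a ∘ σ) (b ∘ σ) := fun φ => by
  simpa only [Formula.realize_relabel] using h (φ.relabel σ)

theorem haveSameType_of_forall_realize_imp {α : Type*} {a : α → M} {b : α → N}
    (h : ∀ φ : L.Formula α, φ.Realize a → φ.Realize b) : HaveSameType L a b := fun φ =>
  ⟨h φ, fun hb => by_contra fun ha => Formula.realize_not.1 (h φ.not (Formula.realize_not.2 ha)) hb⟩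

theorem isElementaryRel_empty (h : M ≅[L] N) : IsElementaryRel L (∅ : Set (M × N)) := by
  rintro (_ | k) p hp φ
  · have hφ := h.realize_sentence (φ.relabel Fin.elim0)
    simp only [Sentence.Realize, Formula.realize_relabel] at hφ
    convert hφ using 2
  · exact absurd (hp 0) (Set.notMem_empty _)

theorem IsElementaryRel.swap {R : Set (M × N)} (hR : IsElementaryRel L R) :
    IsElementaryRel L (Prod.swap ⁻¹' R) :=
  fun _ p hp φ => (hR (Prod.swap ∘ p) hp φ).symm

theorem isElementaryRel_of_subset_range {m : ℕ} {q : Fin m → M × N}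
    (hq : HaveSameType L (Prod.fst ∘ q) (Prod.snd ∘ q)) {R : Set (M × N)}
    (hR : R ⊆ Set.range q) : IsElementaryRel L R := by
  intro k p hp
  choose σ hσ using fun i => hR (hp i)
  obtain rfl : q ∘ σ = p := funext hσ
  exact hq.comp σ

theorem IsElementaryRel.iUnion {ι : Type*} [Preorder ι] [IsDirectedOrder ι] [Nonempty ι]
    {R : ι → Set (M × N)} (hmono : Monotone R) (hR : ∀ i, IsElementaryRel L (R i)) :
    IsElementaryRel L (⋃ i, R i) := by
  intro k p hp
  choose n hn using fun i => Set.mem_iUnion.1 (hp i)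
  obtain ⟨j, hj⟩ := Finite.exists_le n
  exact hR j p fun i => hmono (hj i) (hn i)

theorem IsElementaryRel.eq_of_mem {R : Set (M × N)} (hR : IsElementaryRel L R) {x : M} {y y' : N}
    (h : (x, y) ∈ R) (h' : (x, y') ∈ R) : y = y' := by
  simpa using hR ![(x, y), (x, y')] (by simp [Fin.forall_fin_two, h, h'])
    ((Term.var 0).equal (Term.var 1))

theorem IsElementaryRel.exists_elementaryEmbedding {R : Set (M × N)} (hR : IsElementaryRel L R)
    (htot : ∀ x, ∃ y, (x, y) ∈ R) : ∃ f : M ↪ₑ[L] N, ∀ x, (x, f x) ∈ R := by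
  choose f hf using htot
  exact ⟨⟨f, fun _ φ x => (hR (fun i => (x i, f (x i))) (fun i => hf _) φ).symm⟩, hf⟩

theorem IsElementaryRel.nonempty_equiv {R : Set (M × N)} (hR : IsElementaryRel L R)
    (hM : ∀ x, ∃ y, (x, y) ∈ R) (hN : ∀ y, ∃ x, (x, y) ∈ R) : Nonempty (M ≃[L] N) := by
  obtain ⟨f, hf⟩ := hR.exists_elementaryEmbedding hM
  have hsurj : Function.Surjective f := fun y =>
    let ⟨x, hx⟩ := hN y
    ⟨x, hR.eq_of_mem (hf x) hx⟩
  exact ⟨⟨Equiv.ofBijective f ⟨f.injective, hsurj⟩, f.map_fun, f.map_rel⟩⟩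

theorem IsElementaryRel.forth {S : Set (M × N)} (hS : IsElementaryRel L S)
    (hfin : S.Finite) (h : IsElementaryExtensionPair L M N) (c : M) :
    ∃ d, IsElementaryRel L (insert (c, d) S) := by
  obtain ⟨m, e, rfl⟩ := hfin.fin_embedding
  obtain ⟨d, hd⟩ := h m _ _ (hS e (fun i => ⟨i, rfl⟩)) c
  refine ⟨d, isElementaryRel_of_subset_range (q := Fin.snoc e (c, d)) ?_ ?_⟩
  · simpa only [Fin.comp_snoc] using hd
  · rintro z (rfl | ⟨i, rfl⟩)
    exacts [⟨Fin.last m, Fin.snoc_last _ _⟩, ⟨i.castSucc, Fin.snoc_castSucc _ _ _⟩]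

theorem IsElementaryRel.back {S : Set (M × N)} (hS : IsElementaryRel L S)
    (hfin : S.Finite) (h : IsElementaryExtensionPair L N M) (d : N) :
    ∃ c, IsElementaryRel L (insert (c, d) S) := by
  obtain ⟨c, hc⟩ := hS.swap.forth (hfin.preimage Prod.swap_injective.injOn) h d
  refine ⟨c, ?_⟩
  convert hc.swap using 1
  ext ⟨x, y⟩
  simp [and_comm]

theorem nonempty_equiv_of_isElementaryExtensionPair [Countable M] [Countable N]
    (h : M ≅[L] N) (hMN : IsElementaryExtensionPair L M N) (hNM : IsElementaryExtensionPair L N M) :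
    Nonempty (M ≃[L] N) := by
  have := Encodable.ofCountable M
  have := Encodable.ofCountable N
  let P := {S : Set (M × N) // S.Finite ∧ IsElementaryRel L S}
  let covers : M ⊕ N → Order.Cofinal P := Sum.elim
    (fun x => ⟨{S | x ∈ Prod.fst '' S.1}, fun S =>
      let ⟨y, hy⟩ := S.2.2.forth S.2.1 hMN x
      ⟨⟨_, S.2.1.insert _, hy⟩, ⟨_, Set.mem_insert _ _, rfl⟩, Set.subset_insert _ _⟩⟩)
    (fun y => ⟨{S | y ∈ Prod.snd '' S.1}, fun S =>
      let ⟨x, hx⟩ := S.2.2.back S.2.1 hNM y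
      ⟨⟨_, S.2.1.insert _, hx⟩, ⟨_, Set.mem_insert _ _, rfl⟩, Set.subset_insert _ _⟩⟩)
  let seq := Order.sequenceOfCofinals (⟨∅, Set.finite_empty, isElementaryRel_empty h⟩ : P) covers
  have hR : IsElementaryRel L (⋃ n, (seq n).1) :=
    .iUnion (fun _ _ hmn => Order.sequenceOfCofinals.monotone (P := P) _ covers hmn)
      fun n => (seq n).2.2
  refine hR.nonempty_equiv (fun x => ?_) (fun y => ?_)
  · obtain ⟨⟨_, y⟩, hxy, rfl⟩ := Order.sequenceOfCofinals.encode_mem _ covers (.inl x)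
    exact ⟨y, Set.mem_iUnion.2 ⟨_, hxy⟩⟩
  · obtain ⟨⟨x, _⟩, hxy, rfl⟩ := Order.sequenceOfCofinals.encode_mem _ covers (.inr y)
    exact ⟨x, Set.mem_iUnion.2 ⟨_, hxy⟩⟩

end BackAndForth

section Saturation

variable {M} {N : Type*} [L.Structure N]

def typeOfOver {m k : ℕ} (a : Fin k → M) (x : Fin m → M) : Set (L.Formula (Fin m ⊕ Fin k)) :=
  {φ | φ.Realize (Sum.elim x a)}

variable {L}

noncomputable def existsConj {m k : ℕ} (S : Finset (L.Formula (Fin m ⊕ Fin k))) :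
    L.Formula (Fin k) :=
  ((Formula.iInf fun φ : S => φ.1).relabel Sum.swap).iExs (Fin m)

theorem realize_existsConj {m k : ℕ} (S : Finset (L.Formula (Fin m ⊕ Fin k))) (a : Fin k → N) :
    (existsConj S).Realize a ↔ ∃ x : Fin m → N, ∀ φ ∈ S, φ.Realize (Sum.elim x a) := by
  simp only [existsConj, Formula.realize_iExs, Formula.realize_relabel, Formula.realize_iInf,
    Sum.elim_swap, Subtype.forall]

theorem IsTypeOver.of_haveSameType {m k : ℕ} {a : Fin k → M} {b : Fin k → N}
    {p : Set (L.Formula (Fin m ⊕ Fin k))} (hp : IsTypeOver L M a p) (hab : HaveSameType L a b) :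
    IsTypeOver L N b p := fun S hS =>
  (realize_existsConj S b).1 ((hab _).1 ((realize_existsConj S a).2 (hp S hS)))

theorem completeTypeOver_typeOfOver {m k : ℕ} (a : Fin k → M) (x : Fin m → M) :
    CompleteTypeOver L M a (typeOfOver L a x) :=
  ⟨fun _ hS => ⟨x, fun _ hφ => hS hφ⟩, fun _ => (em _).imp id Formula.realize_not.2⟩

theorem haveSameType_snoc_of_realizesType {k : ℕ} {a : Fin k → M} {b : Fin k → N} {c : M}
    {y : Fin 1 → N} (hy : ∀ φ ∈ typeOfOver L a (fun _ => c), φ.Realize (Sum.elim y b)) :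
    HaveSameType L (Fin.snoc a c) (Fin.snoc b (y 0)) := by
  have h := (haveSameType_of_forall_realize_imp hy).comp (Fin.snoc Sum.inr (Sum.inl 0))
  simpa only [Fin.comp_snoc, Sum.elim_comp_inr, Sum.elim_inl] using h

variable [∀ n, Encodable (L.Functions n)] [∀ n, Encodable (L.Relations n)]

theorem XSaturated.isElementaryExtensionPair {X : Set (Set ℕ)} (hM : XSaturated L M X)
    (hN : XSaturated L N X) : IsElementaryExtensionPair L M N := by
  intro k a b hab c
  have hpM : CompleteTypeOver L M a (typeOfOver L a fun _ : Fin 1 => c) :=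
    completeTypeOver_typeOfOver a _
  have hpN : CompleteTypeOver L N b (typeOfOver L a fun _ => c) :=
    ⟨hpM.1.of_haveSameType hab, hpM.2⟩
  obtain ⟨y, hy⟩ := (hN 1 k b _ hpN).2 ((hM 1 k a _ hpM).1 ⟨_, fun _ hφ => hφ⟩)
  exact ⟨y 0, haveSameType_snoc_of_realizesType hy⟩

end Saturation

theorem countable_xSaturated_isomorphic_general
    (L : FirstOrder.Language.{u, v}) [∀ n, Encodable (L.Functions n)]
    [∀ n, Encodable (L.Relations n)]
    (X : Set (Set ℕ))
    (M N : Type w) [L.Structure M] [L.Structure N] [Countable M] [Countable N]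
    (hMN : M ≅[L] N)
    (hM : XSaturated L M X) (hN : XSaturated L N X) :
    Nonempty (M ≃[L] N) :=
  nonempty_equiv_of_isElementaryExtensionPair hMN (hM.isElementaryExtensionPair hN)
    (hN.isElementaryExtensionPair hM)

/-- Any two countable `X`-saturated models of the same complete theory
are isomorphic, where `X` is a fixed Scott set. -/
theorem countable_xSaturated_isomorphic
    (L : FirstOrder.Language.{u, v}) [∀ n, Encodable (L.Functions n)]
    [∀ n, Encodable (L.Relations n)]
    (X : Set (Set ℕ)) (hX : IsScottSet X)
    (M N : Type w) [L.Structure M] [L.Structure N] [Countable M] [Countable N]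
    (hMN : M ≅[L] N)
    (hM : XSaturated L M X) (hN : XSaturated L N X) :
    Nonempty (M ≃[L] N) :=
  countable_xSaturated_isomorphic_general L X M N hMN hM hN

end Paper
end
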